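/- arXiv:1812.07556 — 3 statements merged into one kernel-verified Lean document; each statement's English description precedes it below -/
import Mathlib

section
/- For every complex number s with Re(s) > 2, ∑_{n=1}^∞ Φ(n)/nˢ = ζ(s−1) − ζ(s)·(1 + 2^{−s}) − ζ(s) · ∑_{n=2}^∞ φ(n) (n+1)^{−s}, where ζ is the Riemann zeta function. -/
open Finset Filter MeasureTheory

/-- The Euler totient function with the convention `φ(0) = 1`. -/
def phi0 : ℕ → ℤ := fun n => if n = 0 then 1 else (Nat.totient n : ℤ)

/-- `Φ(n) = ∑_{d | n} (φ(d) − φ(d−1))`, the sum over positive divisors `d` of `n`. -/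
def PhiFun (n : ℕ) : ℤ := ∑ d ∈ n.divisors, (phi0 d - phi0 (d - 1))

/-!
`Φ` is the Dirichlet convolution of `1` with `n ↦ φ(n) - φ(n-1)`, so its L-series is
`ζ(s) ∑ φ(n) n^{-s} - ζ(s) ∑_{n ≥ 1} φ(n-1) n^{-s}`. Since `∑_{d ∣ n} φ(d) = n`, the first
term is `∑ n · n^{-s} = ζ(s-1)`; splitting off `n = 1, 2` from the second series gives
`1 + 2^{-s} + ∑_{n ≥ 2} φ(n) (n+1)^{-s}`.
-/

open LSeries
open scoped LSeries.notation

lemma LSeries.term_natCast_mul (f : ℕ → ℂ) (s : ℂ) (n : ℕ) :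
    term (fun n ↦ n * f n) s n = term f (s - 1) n := by
  rcases eq_or_ne n 0 with rfl | hn
  · simp
  · have hn' : (n : ℂ) ≠ 0 := Nat.cast_ne_zero.mpr hn
    rw [term_of_ne_zero hn, term_of_ne_zero hn, Complex.cpow_sub _ _ hn', Complex.cpow_one]
    field_simp

lemma LSeries_natCast_mul (f : ℕ → ℂ) (s : ℂ) :
    L (fun n ↦ n * f n) s = L f (s - 1) :=
  tsum_congr (term_natCast_mul f s)

lemma LSeries_natCast_eq_riemannZeta {s : ℂ} (hs : 2 < s.re) :
    L (fun n ↦ (n : ℂ)) s = riemannZeta (s - 1) := by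
  have hs' : 1 < (s - 1).re := by simp only [Complex.sub_re, Complex.one_re]; linarith
  simpa using (LSeries_natCast_mul 1 s).trans (LSeries_one_eq_riemannZeta hs')

lemma LSeriesSummable_of_norm_le_self {f : ℕ → ℂ} (hf : ∀ n ≠ 0, ‖f n‖ ≤ n) {s : ℂ}
    (hs : 2 < s.re) : LSeriesSummable f s :=
  LSeriesSummable_of_le_const_mul_rpow hs
    ⟨1, fun n hn ↦ by norm_num [Real.rpow_one, hf n hn]⟩

lemma tsum_succ_div_cpow_eq_LSeries (f : ℕ → ℂ) (s : ℂ) :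
    ∑' m : ℕ, f (m + 1) / ((m + 1 : ℕ) : ℂ) ^ s = L f s := by
  rw [LSeries, ← Nat.succ_injective.tsum_eq (f := term f s)]
  · exact tsum_congr fun m ↦ (term_of_ne_zero m.succ_ne_zero f s).symm
  · intro n hn
    obtain ⟨m, rfl⟩ := Nat.exists_eq_succ_of_ne_zero fun h0 : n = 0 ↦ hn (h0 ▸ term_zero f s)
    exact ⟨m, rfl⟩

lemma LSeries.one_convolution_apply (f : ℕ → ℂ) (n : ℕ) :
    (1 ⍟ f) n = ∑ d ∈ n.divisors, f d := by
  simp only [convolution_def, Pi.one_apply, one_mul]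
  exact Nat.sum_divisorsAntidiagonal' fun _ b ↦ f b

lemma LSeries.one_convolution_totient : (1 ⍟ ↗Nat.totient) = fun n : ℕ ↦ (n : ℂ) := by
  ext n
  rw [one_convolution_apply, ← Nat.cast_sum, Nat.sum_totient]

lemma LSeriesSummable_totient {s : ℂ} (hs : 2 < s.re) : LSeriesSummable ↗Nat.totient s :=
  LSeriesSummable_of_norm_le_self (fun n _ ↦ by simp [Nat.totient_le]) hs

lemma phi0_of_ne_zero {n : ℕ} (hn : n ≠ 0) : phi0 n = n.totient := if_neg hn

lemma abs_phi0_le (n : ℕ) : |phi0 n| ≤ n + 1 := by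
  rcases eq_or_ne n 0 with rfl | hn
  · simp [phi0]
  · rw [phi0_of_ne_zero hn, Nat.abs_cast]
    exact_mod_cast (Nat.totient_le n).trans n.le_succ

/-- `n ↦ φ(n - 1)`; its value at `0` never enters an L-series. -/
def phi0Pred (n : ℕ) : ℤ := phi0 (n - 1)

lemma PhiFun_eq_one_convolution :
    ↗PhiFun = 1 ⍟ (↗Nat.totient - ↗phi0Pred) := by
  ext n
  rw [one_convolution_apply, PhiFun]
  push_cast
  refine sum_congr rfl fun d hd ↦ ?_
  rw [phi0_of_ne_zero (Nat.ne_of_gt (Nat.pos_of_mem_divisors hd))]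
  simp [phi0Pred]

lemma LSeriesSummable_phi0Pred {s : ℂ} (hs : 2 < s.re) : LSeriesSummable ↗phi0Pred s := by
  refine LSeriesSummable_of_norm_le_self (fun n hn ↦ ?_) hs
  rw [Complex.norm_intCast, ← Int.cast_abs, phi0Pred]
  have hn₁ : ((n - 1 : ℕ) : ℤ) + 1 = n := by omega
  exact_mod_cast hn₁ ▸ abs_phi0_le (n - 1)

lemma LSeries_phi0Pred {s : ℂ} (hs : LSeriesSummable ↗phi0Pred s) :
    L ↗phi0Pred s = 1 + (2 : ℂ) ^ (-s)
      + ∑' m : ℕ, (Nat.totient (m + 2) : ℂ) * ((m + 2 + 1 : ℕ) : ℂ) ^ (-s) := by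
  rw [LSeries, ← hs.sum_add_tsum_nat_add 3]
  congr 1
  · simp [Finset.sum_range_succ, phi0Pred, phi0, Complex.cpow_neg]
  · refine tsum_congr fun m ↦ ?_
    rw [term_of_ne_zero (by omega), phi0Pred, phi0_of_ne_zero (by omega), Complex.cpow_neg,
      div_eq_mul_inv]
    push_cast
    ring_nf

/-- For `Re(s) > 2`,
`∑_{n=1}^∞ Φ(n)/nˢ = ζ(s−1) − ζ(s)(1 + 2^{−s}) − ζ(s) ∑_{n=2}^∞ φ(n)(n+1)^{−s}`
(the first series is indexed by `n = m + 1`, the last by `n = m + 2`, `m : ℕ`). -/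
theorem stmt11 (s : ℂ) (hs : 2 < s.re) :
    ∑' m : ℕ, (PhiFun (m + 1) : ℂ) / ((m + 1 : ℕ) : ℂ) ^ s
      = riemannZeta (s - 1) - riemannZeta s * (1 + (2 : ℂ) ^ (-s))
        - riemannZeta s
          * ∑' m : ℕ, (Nat.totient (m + 2) : ℂ) * ((m + 2 + 1 : ℕ) : ℂ) ^ (-s) := by
  have hs₁ : 1 < s.re := by linarith
  have hone : LSeriesSummable 1 s := LSeriesSummable_one_iff.mpr hs₁
  have htot := LSeriesSummable_totient hs
  have hpred := LSeriesSummable_phi0Pred hs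
  rw [tsum_succ_div_cpow_eq_LSeries ↗PhiFun, PhiFun_eq_one_convolution,
    LSeries_convolution' hone (htot.sub hpred), LSeries_sub htot hpred, mul_sub,
    ← LSeries_convolution' hone htot, one_convolution_totient,
    LSeries_natCast_eq_riemannZeta hs, LSeries_one_eq_riemannZeta hs₁, LSeries_phi0Pred hpred]
  ring
end

section
/- There exists a constant C > 0 such that for all real x ≥ 2 and all real h with 1 ≤ h < x, |∫ₓ^{x+h} S_φ(t) dt − h x log x / ζ(2)| ≤ C (h² log x + x²). -/
open Finset Filter MeasureTheory

/-- `S_φ(t) = ∑_{n ≤ t} φ(⌊t/n⌋)`, the sum over positive integers `n ≤ t`. -/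
noncomputable def Sphi (t : ℝ) : ℝ :=
  ∑ n ∈ Finset.Icc 1 ⌊t⌋₊, (Nat.totient ⌊t / (n : ℝ)⌋₊ : ℝ)

/-!
For `t ≤ v := x + h` the sum defining `S_φ(t)` may be taken over all `n ≤ v`, and the substitution
`t = n s` turns the integral into `∑_{n ≤ v} n (F(v/n) - F(x/n))` with `F(u) = ∫₀^u φ(⌊s⌋) ds`.
Up to `O(u)`, `F(u)` is the summatory function of `φ` at `⌊u⌋`, which by Möbius inversion
`φ = μ * id` is `3u²/π² + O(u log u)`. The main terms add up to `(3/π²)(v² - x²) H_{⌊v⌋}`, and the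
errors to `O(v ∑_{n ≤ v} (1 + log (v/n))) = O(v²)` because `n! ≥ (n/e)ⁿ`. Finally
`H_{⌊v⌋} = log x + O(1)`.
-/

open ArithmeticFunction
open scoped ArithmeticFunction.Moebius LSeries.notation

lemma sum_range_succ_eq_sum_Ioc {M : Type*} [AddCommMonoid M] {f : ℕ → M} (hf : f 0 = 0)
    (N : ℕ) : ∑ k ∈ range (N + 1), f k = ∑ k ∈ Ioc 0 N, f k := by
  rw [range_eq_Ico, sum_eq_sum_Ico_succ_bot N.succ_pos, Nat.succ_eq_add_one,
    Ico_add_one_add_one_eq_Ioc, hf, zero_add]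

lemma hasSum_moebius_div_sq :
    HasSum (fun n : ℕ => (μ n : ℝ) / n ^ 2) (6 / Real.pi ^ 2) := by
  have hs : 1 < (2 : ℂ).re := by norm_num
  have hL : L ↗μ 2 = ((6 / Real.pi ^ 2 : ℝ) : ℂ) := by
    have h := LSeries_zeta_mul_Lseries_moebius hs
    rw [LSeries_zeta_eq_riemannZeta hs, riemannZeta_two] at h
    have hπ : (Real.pi : ℂ) ≠ 0 := Complex.ofReal_ne_zero.mpr Real.pi_ne_zero
    push_cast
    field_simp at h ⊢
    linear_combination h
  have h := (LSeriesSummable_moebius_iff.mpr hs).LSeriesHasSum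
  rw [LSeriesHasSum, hL] at h
  refine Complex.hasSum_ofReal.mp (h.congr_fun fun n => ?_)
  rcases eq_or_ne n 0 with rfl | hn
  · simp
  · rw [LSeries.term_of_ne_zero hn]
    push_cast
    norm_cast

lemma abs_sum_moebius_div_sq_sub_le {K : ℕ} (hK : K ≠ 0) :
    |∑ d ∈ Ioc 0 K, (μ d : ℝ) / d ^ 2 - 6 / Real.pi ^ 2| ≤ 1 / (K : ℝ) := by
  have hlim : Tendsto (fun N => ∑ d ∈ Ioc 0 N, (μ d : ℝ) / d ^ 2) atTop
      (nhds (6 / Real.pi ^ 2)) :=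
    (hasSum_moebius_div_sq.tendsto_sum_nat.comp (tendsto_add_atTop_nat 1)).congr
      fun N => sum_range_succ_eq_sum_Ioc (by simp) N
  rw [abs_sub_comm]
  refine le_of_tendsto (hlim.sub_const _).abs (eventually_atTop.mpr ⟨K, fun N hN => ?_⟩)
  rw [← sum_Ioc_consecutive _ (Nat.zero_le K) hN, add_sub_cancel_left]
  calc |∑ d ∈ Ioc K N, (μ d : ℝ) / d ^ 2| ≤ ∑ d ∈ Ioc K N, ((d : ℝ) ^ 2)⁻¹ := by
        refine (abs_sum_le_sum_abs _ _).trans (sum_le_sum fun d _ => ?_)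
        rw [abs_div, abs_of_nonneg (sq_nonneg (d : ℝ)), div_eq_mul_inv]
        exact mul_le_of_le_one_left (by positivity) (mod_cast abs_moebius_le_one)
    _ ≤ (K : ℝ)⁻¹ - (N : ℝ)⁻¹ := sum_Ioc_inv_sq_le_sub hK hN
    _ ≤ 1 / K := by rw [one_div]; linarith [inv_nonneg.mpr (Nat.cast_nonneg (α := ℝ) N)]

lemma sum_Ioc_natCast (N : ℕ) : ∑ m ∈ Ioc 0 N, (m : ℝ) = N * (N + 1) / 2 := by
  induction N with
  | zero => simp
  | succ N ih =>
    rw [sum_Ioc_succ_top (Nat.zero_le N), ih]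
    push_cast
    ring

lemma abs_sum_Ioc_natFloor_sub_le {y : ℝ} (hy : 0 ≤ y) :
    |∑ m ∈ Ioc 0 ⌊y⌋₊, (m : ℝ) - y ^ 2 / 2| ≤ y / 2 := by
  have h₁ := Nat.floor_le hy
  have h₂ := Nat.lt_floor_add_one y
  rw [sum_Ioc_natCast, abs_le]
  constructor <;> nlinarith [Nat.cast_nonneg (α := ℝ) ⌊y⌋₊]

lemma moebius_mul_id_apply (n : ℕ) :
    ((μ : ArithmeticFunction ℝ) * (ArithmeticFunction.id : ArithmeticFunction ℝ)) n =
      n.totient := by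
  rcases n.eq_zero_or_pos with rfl | hn
  · simp
  have hinv := (sum_eq_iff_sum_mul_moebius_eq (f := fun n => (n.totient : ℝ))
    (g := fun n => (n : ℝ))).mp (fun n _ => mod_cast Nat.sum_totient n) n hn
  simpa [mul_apply] using hinv

lemma sum_totient_eq_sum_moebius (K : ℕ) :
    ∑ n ∈ Ioc 0 K, (n.totient : ℝ) =
      ∑ d ∈ Ioc 0 K, (μ d : ℝ) * ∑ m ∈ Ioc 0 (K / d), (m : ℝ) := by
  simp_rw [← moebius_mul_id_apply, sum_Ioc_mul_eq_sum_sum]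
  simp

lemma abs_sum_totient_sub_le (K : ℕ) :
    |∑ n ∈ Ioc 0 K, (n.totient : ℝ) - 3 / Real.pi ^ 2 * K ^ 2| ≤ K * (1 + Real.log K) := by
  rcases eq_or_ne K 0 with rfl | hK
  · simp
  have hdecomp : ∑ n ∈ Ioc 0 K, (n.totient : ℝ) - 3 / Real.pi ^ 2 * K ^ 2 =
      ∑ d ∈ Ioc 0 K, (μ d : ℝ) * (∑ m ∈ Ioc 0 (K / d), (m : ℝ) - ((K : ℝ) / d) ^ 2 / 2) +
        K ^ 2 / 2 * (∑ d ∈ Ioc 0 K, (μ d : ℝ) / d ^ 2 - 6 / Real.pi ^ 2) := by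
    have hmain : ∑ d ∈ Ioc 0 K, (μ d : ℝ) * (((K : ℝ) / d) ^ 2 / 2) =
        K ^ 2 / 2 * ∑ d ∈ Ioc 0 K, (μ d : ℝ) / d ^ 2 := by
      rw [mul_sum]
      exact sum_congr rfl fun d _ => by ring
    simp_rw [sum_totient_eq_sum_moebius, mul_sub, sum_sub_distrib, hmain]
    ring
  have hfloor : |∑ d ∈ Ioc 0 K,
      (μ d : ℝ) * (∑ m ∈ Ioc 0 (K / d), (m : ℝ) - ((K : ℝ) / d) ^ 2 / 2)|
      ≤ K / 2 * (1 + Real.log K) := by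
    calc _ ≤ ∑ d ∈ Ioc 0 K, (K : ℝ) / 2 * (d : ℝ)⁻¹ := by
          refine (abs_sum_le_sum_abs _ _).trans (sum_le_sum fun d _ => ?_)
          rw [abs_mul, ← Nat.floor_div_eq_div (K := ℝ)]
          calc _ ≤ 1 * ((K : ℝ) / d / 2) := mul_le_mul (mod_cast abs_moebius_le_one)
                (abs_sum_Ioc_natFloor_sub_le (by positivity)) (abs_nonneg _) zero_le_one
            _ = _ := by ring
      _ = K / 2 * harmonic K := by
          rw [← mul_sum, harmonic_eq_sum_Icc]
          push_cast
          rfl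
      _ ≤ K / 2 * (1 + Real.log K) := by gcongr; exact harmonic_le_one_add_log K
  have hmoebius : |(K : ℝ) ^ 2 / 2 * (∑ d ∈ Ioc 0 K, (μ d : ℝ) / d ^ 2 - 6 / Real.pi ^ 2)|
      ≤ (K : ℝ) / 2 := by
    rw [abs_mul, abs_of_nonneg (by positivity)]
    calc _ ≤ (K : ℝ) ^ 2 / 2 * (1 / K) := by gcongr; exact abs_sum_moebius_div_sq_sub_le hK
      _ = (K : ℝ) / 2 := by field_simp
  have hlog : 0 ≤ Real.log K := Real.log_natCast_nonneg K
  rw [hdecomp]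
  calc _ ≤ _ := abs_add_le _ _
    _ ≤ K / 2 * (1 + Real.log K) + (K : ℝ) / 2 := add_le_add hfloor hmoebius
    _ ≤ K * (1 + Real.log K) := by nlinarith [Nat.cast_nonneg (α := ℝ) K]

lemma intervalIntegrable_comp_natFloor_div (f : ℕ → ℝ) {c : ℝ} (hc : 0 < c) (a b : ℝ) :
    IntervalIntegrable (fun s => f ⌊s / c⌋₊) volume a b := by
  rw [intervalIntegrable_iff]
  refine Measure.integrableOn_of_bounded (M := ∑ k ∈ range (⌊max a b / c⌋₊ + 1), |f k|)
    measure_Ioc_lt_top.ne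
    (measurable_from_nat.comp
      (Nat.measurable_floor.comp (measurable_id.div_const c))).aestronglyMeasurable
    ((ae_restrict_iff' measurableSet_uIoc).mpr (Eventually.of_forall fun s hs => ?_))
  have hs : ⌊s / c⌋₊ ≤ ⌊max a b / c⌋₊ :=
    Nat.floor_le_floor (div_le_div_of_nonneg_right (Set.uIoc_subset_uIcc hs).2 hc.le)
  exact single_le_sum (f := fun k => |f k|) (fun _ _ => abs_nonneg _)
    (mem_range.mpr (Nat.lt_succ_of_le hs))

lemma intervalIntegrable_comp_natFloor (f : ℕ → ℝ) (a b : ℝ) :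
    IntervalIntegrable (fun s => f ⌊s⌋₊) volume a b := by
  simpa using intervalIntegrable_comp_natFloor_div f one_pos a b

lemma integral_comp_natFloor_of_le (f : ℕ → ℝ) {k : ℕ} {a b : ℝ} (hka : (k : ℝ) ≤ a)
    (hab : a ≤ b) (hbk : b ≤ k + 1) : ∫ s in a..b, f ⌊s⌋₊ = (b - a) * f k := by
  rw [intervalIntegral.integral_eq_sub_of_hasDeriv_right_of_le hab (f := fun s => s * f k)
    (continuous_mul_const _).continuousOn (fun s hs => ?_)
    (intervalIntegrable_comp_natFloor f a b)]
  · ring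
  · rw [Nat.floor_eq_on_Ico k s ⟨hka.trans hs.1.le, hs.2.trans_le hbk⟩]
    simpa using ((hasDerivAt_id s).mul_const (f k)).hasDerivWithinAt

lemma integral_comp_natFloor (f : ℕ → ℝ) {u : ℝ} (hu : 0 ≤ u) :
    ∫ s in 0..u, f ⌊s⌋₊ = ∑ k ∈ range ⌊u⌋₊, f k + (u - ⌊u⌋₊) * f ⌊u⌋₊ := by
  have hK : ∫ s in 0..(⌊u⌋₊ : ℝ), f ⌊s⌋₊ = ∑ k ∈ range ⌊u⌋₊, f k := by
    rw [← Nat.cast_zero, ← intervalIntegral.sum_integral_adjacent_intervals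
      (a := fun k : ℕ => (k : ℝ)) fun k _ => intervalIntegrable_comp_natFloor f _ _]
    refine sum_congr rfl fun k _ => ?_
    rw [integral_comp_natFloor_of_le f le_rfl (by simp) (by push_cast; rfl)]
    push_cast
    ring
  rw [← intervalIntegral.integral_add_adjacent_intervals (b := ⌊u⌋₊)
    (intervalIntegrable_comp_natFloor f _ _) (intervalIntegrable_comp_natFloor f _ _), hK,
    integral_comp_natFloor_of_le f le_rfl (Nat.floor_le hu) (Nat.lt_floor_add_one u).le]

lemma three_div_pi_sq_le : 3 / Real.pi ^ 2 ≤ 1 / 3 := by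
  rw [div_le_div_iff₀ (by positivity) (by norm_num)]
  nlinarith [Real.pi_gt_three]

noncomputable def totientFloorIntegral (u : ℝ) : ℝ := ∫ s in 0..u, (⌊s⌋₊.totient : ℝ)

lemma abs_totientFloorIntegral_sub_sum_le {u : ℝ} (hu : 0 ≤ u) :
    |totientFloorIntegral u - ∑ n ∈ Ioc 0 ⌊u⌋₊, (n.totient : ℝ)| ≤ u := by
  have hK := Nat.floor_le hu
  have hK₁ := Nat.lt_floor_add_one u
  have hφ : (⌊u⌋₊.totient : ℝ) ≤ ⌊u⌋₊ := mod_cast Nat.totient_le _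
  rw [totientFloorIntegral, integral_comp_natFloor (fun k => (k.totient : ℝ)) hu,
    ← sum_range_succ_eq_sum_Ioc (by simp), sum_range_succ, abs_le]
  constructor <;> nlinarith [Nat.cast_nonneg (α := ℝ) ⌊u⌋₊.totient]

lemma abs_totientFloorIntegral_sub_le {u : ℝ} (hu : 0 ≤ u) :
    |totientFloorIntegral u - 3 / Real.pi ^ 2 * u ^ 2| ≤ u * (3 + Real.posLog u) := by
  set K := ⌊u⌋₊
  have hK := Nat.floor_le hu
  have hK₁ := Nat.lt_floor_add_one u
  have hlog : Real.log K ≤ Real.posLog u :=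
    Real.log_of_nat_eq_posLog ▸ Real.posLog_le_posLog (Nat.cast_nonneg K) hK
  have hsum : |∑ n ∈ Ioc 0 K, (n.totient : ℝ) - 3 / Real.pi ^ 2 * K ^ 2|
      ≤ u * (1 + Real.posLog u) :=
    (abs_sum_totient_sub_le K).trans
      (mul_le_mul hK (by linarith) (by linarith [Real.log_natCast_nonneg K]) hu)
  have hc := three_div_pi_sq_le
  have hsq : |3 / Real.pi ^ 2 * K ^ 2 - 3 / Real.pi ^ 2 * u ^ 2| ≤ u := by
    have h : u ^ 2 - K ^ 2 ≤ 2 * u := by nlinarith [Nat.cast_nonneg (α := ℝ) K]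
    rw [← mul_sub, abs_mul, abs_of_pos (by positivity), abs_sub_comm,
      abs_of_nonneg (by nlinarith [Nat.cast_nonneg (α := ℝ) K])]
    nlinarith [mul_le_mul hc h (by nlinarith [Nat.cast_nonneg (α := ℝ) K]) (by norm_num)]
  calc _ ≤ |totientFloorIntegral u - ∑ n ∈ Ioc 0 K, (n.totient : ℝ)|
        + |∑ n ∈ Ioc 0 K, (n.totient : ℝ) - 3 / Real.pi ^ 2 * K ^ 2|
        + |3 / Real.pi ^ 2 * K ^ 2 - 3 / Real.pi ^ 2 * u ^ 2| :=
        (abs_sub_le _ _ _).trans (add_le_add_left (abs_sub_le _ _ _) _)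
    _ ≤ u + u * (1 + Real.posLog u) + u :=
        add_le_add (add_le_add (abs_totientFloorIntegral_sub_sum_le hu) hsum) hsq
    _ = u * (3 + Real.posLog u) := by ring

lemma sphi_eq_sum {t : ℝ} (ht : 0 ≤ t) {M : ℕ} (hM : ⌊t⌋₊ ≤ M) :
    Sphi t = ∑ n ∈ Icc 1 M, (⌊t / n⌋₊.totient : ℝ) := by
  refine sum_subset (Icc_subset_Icc_right hM) fun n hn hn' => ?_
  have htn : t < n := by
    by_contra! h
    exact hn' (mem_Icc.mpr ⟨(mem_Icc.mp hn).1, Nat.le_floor h⟩)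
  rw [Nat.floor_eq_zero.mpr ((div_lt_one (by linarith)).mpr htn)]
  simp

lemma integral_sphi_eq {x v : ℝ} (hx : 0 ≤ x) (hxv : x ≤ v) :
    ∫ t in x..v, Sphi t = ∑ n ∈ Icc 1 ⌊v⌋₊,
      n * (totientFloorIntegral (v / n) - totientFloorIntegral (x / n)) := by
  have hS : Set.EqOn Sphi (fun t => ∑ n ∈ Icc 1 ⌊v⌋₊, (⌊t / n⌋₊.totient : ℝ)) (Set.uIcc x v) :=
    fun t ht => by
      rw [Set.uIcc_of_le hxv] at ht
      exact sphi_eq_sum (hx.trans ht.1) (Nat.floor_le_floor ht.2)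
  rw [intervalIntegral.integral_congr hS, intervalIntegral.integral_finsetSum fun n hn =>
    intervalIntegrable_comp_natFloor_div (fun k => (k.totient : ℝ))
      (by have := (mem_Icc.mp hn).1; positivity) x v]
  refine sum_congr rfl fun n hn => ?_
  have hn : (n : ℝ) ≠ 0 := by have := (mem_Icc.mp hn).1; positivity
  rw [intervalIntegral.integral_comp_div (fun s => (⌊s⌋₊.totient : ℝ)) hn, smul_eq_mul,
    totientFloorIntegral, totientFloorIntegral, intervalIntegral.integral_interval_sub_left
      (intervalIntegrable_comp_natFloor (fun k => (k.totient : ℝ)) _ _)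
      (intervalIntegrable_comp_natFloor (fun k => (k.totient : ℝ)) _ _)]

lemma sum_posLog_div_le {v : ℝ} (hv : 0 ≤ v) :
    ∑ n ∈ Icc 1 ⌊v⌋₊, Real.posLog (v / n) ≤ v := by
  set M := ⌊v⌋₊
  rcases eq_or_ne M 0 with hM | hM
  · simpa [hM] using hv
  have hM₀ : (0 : ℝ) < M := Nat.cast_pos.mpr (Nat.pos_of_ne_zero hM)
  have hMv : (M : ℝ) ≤ v := Nat.floor_le hv
  have hsplit : ∀ n ∈ Icc 1 M, Real.posLog (v / n) = Real.log (v / M) + Real.log (M / n) := by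
    intro n hn
    have hn₁ : (1 : ℝ) ≤ n := mod_cast (mem_Icc.mp hn).1
    have hnM : (n : ℝ) ≤ M := mod_cast (mem_Icc.mp hn).2
    have hvn : 1 ≤ v / n := (one_le_div (by linarith)).mpr (by linarith)
    rw [Real.posLog_eq_log (by rwa [abs_of_nonneg (by linarith)]),
      ← Real.log_mul (div_pos (hM₀.trans_le hMv) hM₀).ne' (div_pos hM₀ (by linarith)).ne']
    field_simp
  have hprod : ∏ n ∈ Icc 1 M, (M : ℝ) / n = M ^ M / M.factorial := by
    rw [prod_div_distrib, prod_const, Nat.card_Icc, Nat.add_sub_cancel,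
      ← Ico_add_one_right_eq_Icc, ← prod_Ico_id_eq_factorial]
    push_cast
    rfl
  have hfact : Real.log (M ^ M / M.factorial) ≤ M :=
    (Real.log_le_iff_le_exp (by positivity)).mpr (Real.pow_div_factorial_le_exp _ hM₀.le M)
  have hratio : M * Real.log (v / M) ≤ v - M := by
    have := Real.log_le_sub_one_of_pos (div_pos (hM₀.trans_le hMv) hM₀)
    calc _ ≤ M * (v / M - 1) := mul_le_mul_of_nonneg_left this hM₀.le
      _ = v - M := by field_simp
  rw [sum_congr rfl hsplit, sum_add_distrib, sum_const, Nat.card_Icc, Nat.add_sub_cancel,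
    nsmul_eq_mul, ← Real.log_prod fun n hn =>
      div_ne_zero hM₀.ne' (Nat.cast_ne_zero.mpr (by have := (mem_Icc.mp hn).1; omega)), hprod]
  linarith

lemma abs_mul_totientFloorIntegral_div_sub_le {n : ℕ} (hn : 0 < n) {y v : ℝ} (hy : 0 ≤ y)
    (hyv : y ≤ v) :
    |n * (totientFloorIntegral (y / n) - 3 / Real.pi ^ 2 * (y / n) ^ 2)|
      ≤ v * (3 + Real.posLog (v / n)) := by
  have hn : (0 : ℝ) < n := Nat.cast_pos.mpr hn
  rw [abs_mul, abs_of_pos hn]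
  calc _ ≤ n * (y / n * (3 + Real.posLog (y / n))) := mul_le_mul_of_nonneg_left
        (abs_totientFloorIntegral_sub_le (by positivity)) hn.le
    _ = y * (3 + Real.posLog (y / n)) := by field_simp
    _ ≤ v * (3 + Real.posLog (v / n)) := mul_le_mul hyv
        (add_le_add le_rfl (Real.posLog_le_posLog (by positivity) (by gcongr)))
        (by linarith [Real.posLog_nonneg (x := y / n)]) (hy.trans hyv)

lemma abs_integral_sphi_sub_le {x v : ℝ} (hx : 0 ≤ x) (hxv : x ≤ v) :
    |(∫ t in x..v, Sphi t) - 3 / Real.pi ^ 2 * (v ^ 2 - x ^ 2) * harmonic ⌊v⌋₊| ≤ 8 * v ^ 2 := by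
  set M := ⌊v⌋₊
  have hv : 0 ≤ v := hx.trans hxv
  have hmain : 3 / Real.pi ^ 2 * (v ^ 2 - x ^ 2) * harmonic M = ∑ n ∈ Icc 1 M,
      n * (3 / Real.pi ^ 2 * (v / n) ^ 2 - 3 / Real.pi ^ 2 * (x / n) ^ 2) := by
    rw [harmonic_eq_sum_Icc]
    push_cast
    rw [mul_sum]
    refine sum_congr rfl fun n hn => ?_
    have : (n : ℝ) ≠ 0 := by have := (mem_Icc.mp hn).1; positivity
    field_simp
  rw [integral_sphi_eq hx hxv, hmain, ← sum_sub_distrib]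
  calc _ ≤ ∑ n ∈ Icc 1 M, 2 * (v * (3 + Real.posLog (v / n))) := by
        refine (abs_sum_le_sum_abs _ _).trans (sum_le_sum fun n hn => ?_)
        rw [show ∀ a b c d e : ℝ, a * (b - c) - a * (d - e) = a * (b - d) - a * (c - e) by
          intros; ring, two_mul]
        have hn : 0 < n := (mem_Icc.mp hn).1
        exact (abs_sub _ _).trans (add_le_add
          (abs_mul_totientFloorIntegral_div_sub_le hn hv le_rfl)
          (abs_mul_totientFloorIntegral_div_sub_le hn hx hxv))
    _ = 2 * v * (3 * M + ∑ n ∈ Icc 1 M, Real.posLog (v / n)) := by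
        simp only [← mul_sum, sum_add_distrib, sum_const, Nat.card_Icc, Nat.add_sub_cancel,
          nsmul_eq_mul]
        ring
    _ ≤ 2 * v * (3 * v + v) := by
        gcongr
        · exact Nat.floor_le hv
        · exact sum_posLog_div_le hv
    _ = 8 * v ^ 2 := by ring

lemma abs_mul_harmonic_sub_le {x h : ℝ} (hx : 1 ≤ x) (hh : 0 ≤ h) (hhx : h ≤ x) :
    |3 / Real.pi ^ 2 * ((x + h) ^ 2 - x ^ 2) * harmonic ⌊x + h⌋₊
      - h * x * Real.log x / (Real.pi ^ 2 / 6)| ≤ 3 * x ^ 2 + h ^ 2 * Real.log x := by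
  set H : ℝ := (harmonic ⌊x + h⌋₊ : ℝ)
  set c := 3 / Real.pi ^ 2 with hc_def
  have hc₀ : 0 < c := by positivity
  have hc : c ≤ 1 / 3 := three_div_pi_sq_le
  have hlog : 0 ≤ Real.log x := Real.log_nonneg hx
  have hH₁ : Real.log x ≤ H := (Real.log_le_log (by linarith) (by linarith)).trans
    (log_le_harmonic_floor _ (by linarith))
  have hH₂ : H ≤ 2 + Real.log x := by
    have h2x : Real.log (x + h) ≤ Real.log 2 + Real.log x := by
      rw [← Real.log_mul two_ne_zero (by linarith)]
      exact Real.log_le_log (by linarith) (by linarith)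
    linarith [harmonic_floor_le_one_add_log (x + h) (by linarith), Real.log_two_lt_d9]
  have hsplit : c * ((x + h) ^ 2 - x ^ 2) * H - h * x * Real.log x / (Real.pi ^ 2 / 6)
      = 2 * c * (h * x) * (H - Real.log x) + c * h ^ 2 * H := by
    rw [hc_def]
    field_simp
    ring
  have hA : 2 * c * (h * x) * (H - Real.log x) ≤ 2 * (1 / 3) * (x * x) * 2 := by
    gcongr
    linarith
  have hB : c * h ^ 2 * H ≤ 1 / 3 * h ^ 2 * (2 + Real.log x) := by
    gcongr
    linarith
  have hh2 : h ^ 2 ≤ x ^ 2 := by nlinarith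
  rw [hsplit, abs_of_nonneg (by have := hlog.trans hH₁; positivity)]
  nlinarith [mul_nonneg (sq_nonneg h) hlog]

/-- For all `x ≥ 2` and `1 ≤ h < x`:
`∫ₓ^{x+h} S_φ(t) dt = h x log x / ζ(2) + O(h² log x + x²)`, where `ζ(2) = π²/6`. -/
theorem stmt17 :
    ∃ C : ℝ, 0 < C ∧ ∀ x : ℝ, 2 ≤ x → ∀ h : ℝ, 1 ≤ h → h < x →
      |(∫ t in x..(x + h), Sphi t) - h * x * Real.log x / (Real.pi ^ 2 / 6)|
        ≤ C * (h ^ 2 * Real.log x + x ^ 2) := by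
  refine ⟨35, by norm_num, fun x hx h hh hhx => ?_⟩
  have hint := abs_integral_sphi_sub_le (x := x) (v := x + h) (by linarith) (by linarith)
  have hmain := abs_mul_harmonic_sub_le (by linarith) (by linarith) hhx.le
  have hlog : 0 ≤ h ^ 2 * Real.log x := mul_nonneg (sq_nonneg h) (Real.log_nonneg (by linarith))
  calc _ ≤ 8 * (x + h) ^ 2 + (3 * x ^ 2 + h ^ 2 * Real.log x) :=
        (abs_sub_le _ _ _).trans (add_le_add hint hmain)
    _ ≤ 35 * (h ^ 2 * Real.log x + x ^ 2) := by nlinarith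
end

section
/- There exists a constant C > 0 such that for all real x ≥ 2, |∑_{n ≤ x} Φ(n) log(x/n) − ∫₁ˣ S_φ(t)/t dt| ≤ C x, i.e. the Riesz-type weighted sum T^r_φ(x) = ∑_{n ≤ x} Φ(n) log(x/n) satisfies T^r_φ(x) = ∫₁ˣ S_φ(t)/t dt + O(x). -/
open Finset Filter MeasureTheory

theorem sum_Ioc_zero_sub_pred {G : Type*} [AddCommGroup G] (h : ℕ → G) (M : ℕ) :
    ∑ m ∈ Ioc 0 M, (h m - h (m - 1)) = h M - h 0 := by
  induction M with
  | zero => simp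
  | succ M ih =>
    rw [sum_Ioc_succ_top (Nat.zero_le M), ih, Nat.add_sub_cancel]
    abel

theorem sum_Icc_zero_eq_sum_Icc_one {M : Type*} [AddCommMonoid M] {g : ℕ → M} (hg : g 0 = 0)
    (N : ℕ) : ∑ k ∈ Icc 0 N, g k = ∑ k ∈ Icc 1 N, g k := by
  rw [Icc_eq_cons_Ioc (Nat.zero_le N), sum_cons, hg, zero_add]
  rfl

theorem sum_mul_log_div_eq_integral (c : ℕ → ℝ) {x : ℝ} (hx : 1 ≤ x) :
    ∑ n ∈ Icc 1 ⌊x⌋₊, c n * Real.log (x / n) =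
      ∫ t in (1 : ℝ)..x, (∑ n ∈ Icc 1 ⌊t⌋₊, c n) / t := by
  set f : ℝ → ℝ := fun t => Real.log x - Real.log t with hf
  set c₀ : ℕ → ℝ := fun n => if n = 0 then 0 else c n with hc₀
  have hderiv : deriv f = fun t => -t⁻¹ := by
    rw [hf, deriv_const_sub', Real.deriv_log']
  have hdiff : ∀ t ∈ Set.Icc 1 x, DifferentiableAt ℝ f t :=
    fun t ht => (differentiableAt_const _).sub (Real.differentiableAt_log (by linarith [ht.1]))
  have hint : IntegrableOn (deriv f) (Set.Icc 1 x) := by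
    rw [hderiv]
    refine (continuousOn_inv₀.neg.mono fun t ht => ?_).integrableOn_Icc
    exact ne_of_gt (by linarith [ht.1] : (0:ℝ) < t)
  have hsum : ∀ N, ∑ k ∈ Icc 0 N, c₀ k = ∑ k ∈ Icc 1 N, c k := fun N => by
    rw [sum_Icc_zero_eq_sum_Icc_one (g := c₀) (if_pos rfl)]
    exact sum_congr rfl fun k hk => if_neg (by simp at hk; omega)
  have hsum_mul : ∑ k ∈ Icc 0 ⌊x⌋₊, f k * c₀ k = ∑ k ∈ Icc 1 ⌊x⌋₊, c k * Real.log (x / k) := by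
    rw [sum_Icc_zero_eq_sum_Icc_one (by simp [c₀])]
    refine sum_congr rfl fun k hk => ?_
    have hk : 0 < k := by simp at hk; omega
    rw [hf, hc₀]
    dsimp only
    rw [if_neg hk.ne', Real.log_div (by linarith) (by positivity), mul_comm]
  have abel := sum_mul_eq_sub_integral_mul₀ c₀ (if_pos rfl) x hdiff hint
  rw [hsum_mul, hderiv] at abel
  simp only [hf, hsum, sub_self, zero_mul, zero_sub, ← intervalIntegral.integral_of_le hx] at abel
  rw [abel, ← intervalIntegral.integral_neg]
  refine intervalIntegral.integral_congr fun t _ => ?_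
  ring

theorem abs_sum_log_div_le {x : ℝ} (hx : 1 ≤ x) :
    |∑ n ∈ Icc 1 ⌊x⌋₊, Real.log (x / n)| ≤ x - 1 := by
  have h := sum_mul_log_div_eq_integral (fun _ => 1) hx
  simp only [one_mul, sum_const, Nat.card_Icc, add_tsub_cancel_right, nsmul_eq_mul,
    mul_one] at h
  rw [h, ← Real.norm_eq_abs]
  have hbound : ∀ t ∈ Set.uIoc 1 x, ‖(⌊t⌋₊ : ℝ) / t‖ ≤ 1 := fun t ht => by
    rw [Set.uIoc_of_le hx] at ht
    have ht0 : 0 < t := by linarith [ht.1]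
    rw [Real.norm_of_nonneg (by positivity), div_le_one ht0]
    exact Nat.floor_le ht0.le
  simpa [abs_of_nonneg (sub_nonneg.mpr hx)] using
    intervalIntegral.norm_integral_le_of_norm_le_const hbound

open ArithmeticFunction ArithmeticFunction.zeta in
theorem sum_PhiFun_eq_sum_totient_div_sub_one (N : ℕ) :
    ∑ n ∈ Icc 1 N, PhiFun n = ∑ k ∈ Icc 1 N, ((Nat.totient (N / k) : ℤ) - 1) := by
  let g : ArithmeticFunction ℤ := ⟨fun d => phi0 d - phi0 (d - 1), by simp⟩
  have hPhi : ∀ n, PhiFun n = ((ζ : ArithmeticFunction ℤ) * g) n := fun n => by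
    rw [coe_zeta_mul_apply]
    rfl
  simp_rw [hPhi]
  -- `Icc 1 N` and `Ioc 0 N` are definitionally equal finsets of `ℕ`.
  refine (sum_Ioc_mul_eq_sum_sum _ g N).trans (sum_congr rfl fun k hk => ?_)
  have hk : 0 < k ∧ k ≤ N := mem_Ioc.mp hk
  have hNk : N / k ≠ 0 := (Nat.div_pos hk.2 hk.1).ne'
  rw [natCoe_apply, zeta_apply_ne hk.1.ne', Nat.cast_one, one_mul]
  exact (sum_Ioc_zero_sub_pred phi0 (N / k)).trans (by simp [phi0, hNk])

theorem Sphi_eq_sum_PhiFun_add_one (t : ℝ) :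
    Sphi t = ∑ n ∈ Icc 1 ⌊t⌋₊, ((PhiFun n : ℝ) + 1) := by
  have h := congrArg (Int.cast : ℤ → ℝ) (sum_PhiFun_eq_sum_totient_div_sub_one ⌊t⌋₊)
  push_cast at h
  rw [sum_add_distrib, h, ← sum_add_distrib]
  simp only [Sphi, Nat.floor_div_natCast, sub_add_cancel]

/-- The Riesz-type weighted sum `T^r_φ(x) = ∑_{n ≤ x} Φ(n) log(x/n)` satisfies
`T^r_φ(x) = ∫₁ˣ S_φ(t)/t dt + O(x)` for `x ≥ 2`. -/
theorem stmt19 :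
    ∃ C : ℝ, 0 < C ∧ ∀ x : ℝ, 2 ≤ x →
      |(∑ n ∈ Finset.Icc 1 ⌊x⌋₊, (PhiFun n : ℝ) * Real.log (x / (n : ℝ)))
          - ∫ t in (1:ℝ)..x, Sphi t / t|
        ≤ C * x := by
  refine ⟨1, one_pos, fun x hx => ?_⟩
  have hx1 : 1 ≤ x := by linarith
  simp_rw [Sphi_eq_sum_PhiFun_add_one]
  rw [← sum_mul_log_div_eq_integral _ hx1, ← sum_sub_distrib]
  simp_rw [← sub_mul, sub_add_cancel_left, neg_one_mul, sum_neg_distrib, abs_neg]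
  linarith [abs_sum_log_div_le hx1]
end
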